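/- Let F : ℂ → ℂ be smooth (as a function of two real variables) such that F and all its partial derivatives grow at most polynomially, i.e. for every multi-index α there exist C > 0 and N ∈ ℕ with |∂^α F(z)| ≤ C (1 + |z|)^N for all z ∈ ℂ. If (u_ε)_{ε∈(0,1]} is a moderate net of elements of 𝓑_ap, then (F ∘ u_ε)_{ε∈(0,1]} is again a moderate net of elements of 𝓑_ap; moreover, replacing (u_ε) by another moderate net (v_ε) with (u_ε − v_ε) negligible makes (F ∘ u_ε − F ∘ v_ε) negligible. -/

import Mathlib

/-!
Differentiating `F ∘ u` repeatedly by the chain rule writes `(F ∘ u)⁽ʲ⁾` as a fixed smooth function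
of `(u, u', …, u⁽ʲ⁾)`. A continuous function of finitely many almost periodic functions is almost
periodic: extract one subsequence along which all translates converge uniformly; they stay in a
compact box, on which the outer function is uniformly continuous. Hence `F ∘ u_ε ∈ 𝓑_ap`.

Moderateness follows from the Faà di Bruno bound `‖(F ∘ u)⁽ʲ⁾‖ ≤ j! C (1 + R) ^ (N + j)` when
`‖u⁽ⁱ⁾‖ ≤ R` for `i ≤ j`. For the difference, the mean value inequality gives
`‖F u_ε - F v_ε‖ ≤ C (1 + R) ^ N ‖u_ε - v_ε‖`, so it is negligible at order `0`. Being moderate at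
every order, it is then negligible at every order by Landau's inequality
`‖f'‖ ≤ 2 ‖f‖ / h + h ‖f''‖`, with `h` a suitable power of `ε`.
-/

open Filter MeasureTheory Topology

noncomputable section

/-- A function `f : ℝ → ℂ` is almost periodic in the sense of Bochner: it is continuous
and from every sequence of real translates one can extract a subsequence along which
the translates converge uniformly on `ℝ`. -/
def AlmostPeriodic (f : ℝ → ℂ) : Prop :=
  Continuous f ∧ ∀ h : ℕ → ℝ, ∃ φ : ℕ → ℕ, StrictMono φ ∧ ∃ g : ℝ → ℂ,
    TendstoUniformly (fun k x => f (x + h (φ k))) g atTop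

/-- `f ∈ 𝓑_ap` : `f` is smooth and every derivative of `f` is almost periodic. -/
def BAp (f : ℝ → ℂ) : Prop :=
  ContDiff ℝ (⊤ : ℕ∞) f ∧ ∀ j : ℕ, AlmostPeriodic (iteratedDeriv j f)

/-- The seminorm `|f|_{k,∞} = Σ_{j ≤ k} sup_{x ∈ ℝ} ‖f^{(j)}(x)‖`. -/
def apSeminorm (k : ℕ) (f : ℝ → ℂ) : ℝ :=
  ∑ j ∈ Finset.range (k + 1), ⨆ x : ℝ, ‖iteratedDeriv j f x‖

/-- A net `(u_ε)_{ε ∈ (0,1]}` is moderate. -/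
def Moderate (u : ℝ → ℝ → ℂ) : Prop :=
  ∀ k : ℕ, ∃ m : ℕ, ∃ C > 0, ∃ ε₀ ∈ Set.Ioc (0:ℝ) 1,
    ∀ ε ∈ Set.Ioc (0:ℝ) 1, ε ≤ ε₀ → apSeminorm k (u ε) ≤ C / ε ^ m

/-- A net `(u_ε)_{ε ∈ (0,1]}` is negligible. -/
def Negligible (u : ℝ → ℝ → ℂ) : Prop :=
  ∀ k m : ℕ, ∃ C > 0, ∃ ε₀ ∈ Set.Ioc (0:ℝ) 1,
    ∀ ε ∈ Set.Ioc (0:ℝ) 1, ε ≤ ε₀ → apSeminorm k (u ε) ≤ C * ε ^ m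

open Set
open scoped ContDiff

theorem AlmostPeriodic.bddAbove_range_norm {f : ℝ → ℂ} (hf : AlmostPeriodic f) :
    BddAbove (range fun x => ‖f x‖) := by
  by_contra hunbdd
  have : ∀ n : ℕ, ∃ x, (n : ℝ) < ‖f x‖ := fun n => by
    simpa using not_bddAbove_iff.1 hunbdd n
  choose h hh using this
  obtain ⟨φ, hφ, g, hg⟩ := hf.2 h
  have hlim : Tendsto (fun k => ‖f (h (φ k))‖) atTop (𝓝 ‖g 0‖) := by
    simpa using (hg.tendsto_at 0).norm
  refine not_tendsto_atTop_of_tendsto_nhds hlim (tendsto_atTop_mono (fun k => (hh (φ k)).le) ?_)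
  exact tendsto_natCast_atTop_atTop.comp hφ.tendsto_atTop

theorem exists_strictMono_forall_tendstoUniformly :
    ∀ {n : ℕ} {w : Fin n → ℝ → ℂ}, (∀ i, AlmostPeriodic (w i)) → ∀ h : ℕ → ℝ,
      ∃ φ : ℕ → ℕ, StrictMono φ ∧
        ∀ i, ∃ g, TendstoUniformly (fun k x => w i (x + h (φ k))) g atTop
  | 0, _, _, _ => ⟨id, strictMono_id, fun i => i.elim0⟩
  | _ + 1, w, hw, h => by
    obtain ⟨φ₁, hφ₁, g₀, hg₀⟩ := (hw 0).2 h
    obtain ⟨φ₂, hφ₂, hconv⟩ :=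
      exists_strictMono_forall_tendstoUniformly (fun i => hw i.succ) (h ∘ φ₁)
    refine ⟨φ₁ ∘ φ₂, hφ₁.comp hφ₂, Fin.cases ?_ hconv⟩
    exact ⟨g₀, fun s hs => hφ₂.tendsto_atTop.eventually (hg₀ s hs)⟩

theorem tendstoUniformly_pi {ι α β γ : Type*} [Fintype ι] [PseudoMetricSpace β] {p : Filter γ}
    {F : γ → α → ι → β} {f : α → ι → β}
    (h : ∀ i, TendstoUniformly (fun n x => F n x i) (fun x => f x i) p) :
    TendstoUniformly F f p := by
  refine Metric.tendstoUniformly_iff.2 fun δ hδ => ?_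
  filter_upwards [eventually_all.2 fun i => Metric.tendstoUniformly_iff.1 (h i) δ hδ] with n hn x
  exact (dist_pi_lt_iff hδ).2 fun i => hn i x

theorem AlmostPeriodic.continuous_comp {n : ℕ} {w : Fin n → ℝ → ℂ}
    (hw : ∀ i, AlmostPeriodic (w i)) {Ψ : (Fin n → ℂ) → ℂ} (hΨ : Continuous Ψ) :
    AlmostPeriodic fun x => Ψ fun i => w i x := by
  refine ⟨hΨ.comp (continuous_pi fun i => (hw i).1), fun h => ?_⟩
  obtain ⟨φ, hφ, hconv⟩ := exists_strictMono_forall_tendstoUniformly hw h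
  choose g hg using hconv
  choose M hM using fun i => (hw i).bddAbove_range_norm
  obtain ⟨R, hR⟩ := Finite.bddAbove_range M
  have hwR : ∀ i x, ‖w i x‖ ≤ R := fun i x =>
    (hM i (mem_range_self x)).trans (hR (mem_range_self i))
  set K := univ.pi fun _ : Fin n => Metric.closedBall (0 : ℂ) R
  have hΨK : UniformContinuousOn Ψ K :=
    (isCompact_univ_pi fun _ => isCompact_closedBall 0 R).uniformContinuousOn_of_continuous
      hΨ.continuousOn
  have hwK : ∀ k x, (fun i => w i (x + h (φ k))) ∈ K := fun k x =>
    mem_univ_pi.2 fun i => mem_closedBall_zero_iff.2 (hwR i _)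
  have hgK : ∀ x, (fun i => g i x) ∈ K := fun x => mem_univ_pi.2 fun i =>
    mem_closedBall_zero_iff.2 (le_of_tendsto' ((hg i).tendsto_at x).norm fun k => hwR i _)
  exact ⟨φ, hφ, _, hΨK.comp_tendstoUniformly hwK hgK (tendstoUniformly_pi hg)⟩

theorem AlmostPeriodic.sub {f g : ℝ → ℂ} (hf : AlmostPeriodic f) (hg : AlmostPeriodic g) :
    AlmostPeriodic fun x => f x - g x := by
  simpa using AlmostPeriodic.continuous_comp (w := ![f, g]) (Fin.forall_fin_two.2 ⟨hf, hg⟩)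
    (Ψ := fun z => z 0 - z 1) (by fun_prop)

section FaaDiBruno

variable {E G : Type*} [NormedAddCommGroup E] [NormedSpace ℝ E] [NormedAddCommGroup G]
  [NormedSpace ℝ G]

def faaDiBrunoExpr (F : E → G) : (j : ℕ) → (Fin (j + 1) → E) → G
  | 0 => fun z => F (z 0)
  | j + 1 => fun z => fderiv ℝ (faaDiBrunoExpr F j) (Fin.init z) (Fin.tail z)

theorem contDiff_faaDiBrunoExpr {F : E → G} (hF : ContDiff ℝ ∞ F) :
    ∀ j, ContDiff ℝ ∞ (faaDiBrunoExpr F j)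
  | 0 => hF.comp (contDiff_apply ℝ E 0)
  | j + 1 => by
    have hinit : ContDiff ℝ ∞ fun z : Fin (j + 2) → E => Fin.init z :=
      contDiff_pi.2 fun i => contDiff_apply ℝ E i.castSucc
    have htail : ContDiff ℝ ∞ fun z : Fin (j + 2) → E => Fin.tail z :=
      contDiff_pi.2 fun i => contDiff_apply ℝ E i.succ
    exact (((contDiff_faaDiBrunoExpr hF j).fderiv_right le_rfl).comp hinit).clm_apply htail

theorem iteratedDeriv_comp_eq_faaDiBrunoExpr {F : E → G} (hF : ContDiff ℝ ∞ F) {f : ℝ → E}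
    (hf : ContDiff ℝ ∞ f) (j : ℕ) (x : ℝ) :
    iteratedDeriv j (fun x => F (f x)) x = faaDiBrunoExpr F j fun i => iteratedDeriv i f x := by
  induction j generalizing x with
  | zero => simp [faaDiBrunoExpr]
  | succ j ih =>
    have hderivs : HasDerivAt (fun y (i : Fin (j + 1)) => iteratedDeriv i f y)
        (fun i : Fin (j + 1) => iteratedDeriv (i + 1) f x) x := by
      refine hasDerivAt_pi.2 fun i => ?_
      rw [iteratedDeriv_succ]
      exact (hf.differentiable_iteratedDeriv i
        (by exact_mod_cast ENat.natCast_lt_top i) x).hasDerivAt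
    have hcomp := ((contDiff_faaDiBrunoExpr hF j).differentiable (by simp) _).hasFDerivAt
      |>.comp_hasDerivAt x hderivs
    rw [iteratedDeriv_succ, funext ih]
    exact hcomp.deriv

theorem iteratedDeriv_fun_sub_eq {f g : ℝ → E} (hf : ContDiff ℝ ∞ f) (hg : ContDiff ℝ ∞ g)
    (j : ℕ) :
    iteratedDeriv j (fun x => f x - g x) = fun x => iteratedDeriv j f x - iteratedDeriv j g x :=
  funext fun x => iteratedDeriv_fun_sub (hf.of_le (by exact_mod_cast le_top)).contDiffAt
    (hg.of_le (by exact_mod_cast le_top)).contDiffAt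

end FaaDiBruno

theorem BAp.sub {f g : ℝ → ℂ} (hf : BAp f) (hg : BAp g) : BAp fun x => f x - g x :=
  ⟨hf.1.sub hg.1, fun j => by
    rw [iteratedDeriv_fun_sub_eq hf.1 hg.1]
    exact (hf.2 j).sub (hg.2 j)⟩

theorem BAp.comp {f : ℝ → ℂ} (hf : BAp f) {F : ℂ → ℂ} (hF : ContDiff ℝ ∞ F) :
    BAp fun x => F (f x) :=
  ⟨hF.comp hf.1, fun j => by
    simp only [funext (iteratedDeriv_comp_eq_faaDiBrunoExpr hF hf.1 j)]
    exact AlmostPeriodic.continuous_comp (fun i => hf.2 i)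
      (contDiff_faaDiBrunoExpr hF j).continuous⟩

theorem exists_forall_le_mul_one_add_norm_pow {E : Type*} [SeminormedAddCommGroup E]
    {b : ℕ → E → ℝ} (hb : ∀ n, ∃ C > (0 : ℝ), ∃ N : ℕ, ∀ z, b n z ≤ C * (1 + ‖z‖) ^ N) (j : ℕ) :
    ∃ C > (0 : ℝ), ∃ N : ℕ, ∀ i ≤ j, ∀ z, b i z ≤ C * (1 + ‖z‖) ^ N := by
  choose C hC N hN using hb
  refine ⟨∑ i ∈ Finset.Iic j, C i, Finset.sum_pos (fun i _ => hC i) ⟨0, by simp⟩,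
    (Finset.Iic j).sup N, fun i hi z => (hN i z).trans ?_⟩
  have hi' : i ∈ Finset.Iic j := Finset.mem_Iic.2 hi
  exact mul_le_mul (Finset.single_le_sum (fun k _ => (hC k).le) hi')
    (pow_le_pow_right₀ (le_add_of_nonneg_right (norm_nonneg z)) (Finset.le_sup hi'))
    (by positivity) (Finset.sum_nonneg fun k _ => (hC k).le)

section Estimates

variable {E G : Type*} [NormedAddCommGroup E] [NormedSpace ℝ E] [NormedAddCommGroup G]
  [NormedSpace ℝ G]

theorem norm_iteratedDeriv_comp_le_of_growth {F : E → G} (hF : ContDiff ℝ ∞ F) {f : ℝ → E}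
    (hf : ContDiff ℝ ∞ f) {j N : ℕ} {C R : ℝ} (hC : 0 ≤ C)
    (hFC : ∀ i ≤ j, ∀ z, ‖iteratedFDeriv ℝ i F z‖ ≤ C * (1 + ‖z‖) ^ N) {x : ℝ}
    (hfR : ∀ i ≤ j, ‖iteratedDeriv i f x‖ ≤ R) :
    ‖iteratedDeriv j (fun x => F (f x)) x‖ ≤ j.factorial * C * (1 + R) ^ (N + j) := by
  have hR : 0 ≤ R := (norm_nonneg _).trans (hfR 0 (Nat.zero_le j))
  rw [← norm_iteratedFDeriv_eq_norm_iteratedDeriv, pow_add, ← mul_assoc, mul_assoc _ C]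
  refine norm_iteratedFDeriv_comp_le hF hf (by exact_mod_cast le_top) x (fun i hi => ?_)
    fun i hi₁ hij => ?_
  · refine (hFC i hi _).trans (by gcongr; simpa using hfR 0 (Nat.zero_le j))
  · rw [norm_iteratedFDeriv_eq_norm_iteratedDeriv]
    exact (hfR i hij).trans ((le_add_of_nonneg_left zero_le_one).trans
      (le_self_pow₀ (by linarith) (by omega)))

theorem norm_sub_le_of_norm_fderiv_le {F : E → G} (hF : Differentiable ℝ F) {C R : ℝ} {N : ℕ}
    (hC : 0 ≤ C) (hFC : ∀ z, ‖fderiv ℝ F z‖ ≤ C * (1 + ‖z‖) ^ N) {a b : E} (ha : ‖a‖ ≤ R)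
    (hb : ‖b‖ ≤ R) : ‖F a - F b‖ ≤ C * (1 + R) ^ N * ‖a - b‖ := by
  refine (convex_closedBall (0 : E) R).norm_image_sub_le_of_norm_fderiv_le
    (fun z _ => hF z) (fun z hz => (hFC z).trans ?_) (by simpa using hb) (by simpa using ha)
  gcongr
  simpa using hz

theorem norm_sub_sub_smul_deriv_le {f : ℝ → E} (hf : ContDiff ℝ 2 f) {M : ℝ}
    (hM : ∀ y, ‖iteratedDeriv 2 f y‖ ≤ M) (x h : ℝ) :
    ‖f (x + h) - f x - h • deriv f x‖ ≤ M * h ^ 2 := by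
  have hM₀ : 0 ≤ M := (norm_nonneg _).trans (hM x)
  have hf' : Differentiable ℝ (deriv f) := by
    simpa using hf.differentiable_iteratedDeriv' 1
  have hlip : ∀ y, ‖deriv f y - deriv f x‖ ≤ M * ‖y - x‖ := fun y =>
    convex_univ.norm_image_sub_le_of_norm_deriv_le (fun z _ => hf' z)
      (fun z _ => by simpa [iteratedDeriv_succ] using hM z) (mem_univ x) (mem_univ y)
  have hmv := (convex_closedBall x |h|).norm_image_sub_le_of_norm_hasDerivWithin_le
    (f := fun y => f y - y • deriv f x) (f' := fun y => deriv f y - deriv f x) (y := x + h)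
    (fun y _ => (((hf.differentiable (by simp)) y).hasDerivAt.sub
      ((hasDerivAt_id y).smul_const (deriv f x))).hasDerivWithinAt.congr_deriv (by simp))
    (fun y hy => (hlip y).trans (mul_le_mul_of_nonneg_left (Metric.mem_closedBall.1 hy) hM₀))
    (Metric.mem_closedBall_self (abs_nonneg h)) (by simp)
  calc ‖f (x + h) - f x - h • deriv f x‖
      = ‖f (x + h) - (x + h) • deriv f x - (f x - x • deriv f x)‖ := by
        congr 1; rw [add_smul]; abel
    _ ≤ M * |h| * ‖x + h - x‖ := hmv
    _ = M * h ^ 2 := by simp [mul_assoc, ← sq]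

/-- Landau's interpolation inequality. -/
theorem norm_deriv_le_of_norm_le_of_norm_iteratedDeriv_two_le {f : ℝ → E} (hf : ContDiff ℝ 2 f)
    {M₀ M₂ : ℝ} (h₀ : ∀ y, ‖f y‖ ≤ M₀) (h₂ : ∀ y, ‖iteratedDeriv 2 f y‖ ≤ M₂) {h : ℝ}
    (hh : 0 < h) (x : ℝ) : ‖deriv f x‖ ≤ 2 * M₀ / h + h * M₂ := by
  have key : h * ‖deriv f x‖ ≤ 2 * M₀ + M₂ * h ^ 2 := calc
    h * ‖deriv f x‖ = ‖(f (x + h) - f x) - (f (x + h) - f x - h • deriv f x)‖ := by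
        rw [sub_sub_cancel, norm_smul, Real.norm_of_nonneg hh.le]
    _ ≤ ‖f (x + h)‖ + ‖f x‖ + M₂ * h ^ 2 :=
        (norm_sub_le _ _).trans (add_le_add (norm_sub_le _ _)
          (norm_sub_sub_smul_deriv_le hf h₂ x h))
    _ ≤ 2 * M₀ + M₂ * h ^ 2 := by linarith [h₀ (x + h), h₀ x]
  rw [div_add' _ _ _ hh.ne', le_div_iff₀ hh]
  linarith

end Estimates

theorem eventually_nhdsGT_zero_iff_Ioc {P : ℝ → Prop} :
    (∀ᶠ ε in 𝓝[>] 0, P ε) ↔ ∃ ε₀ ∈ Ioc (0 : ℝ) 1, ∀ ε ∈ Ioc (0 : ℝ) 1, ε ≤ ε₀ → P ε := by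
  rw [(nhdsGT_basis_Ioc (0 : ℝ)).eventually_iff]
  constructor
  · rintro ⟨i, hi, hP⟩
    exact ⟨min i 1, ⟨lt_min hi one_pos, min_le_right _ _⟩,
      fun ε hε hεi => hP ⟨hε.1, hεi.trans (min_le_left _ _)⟩⟩
  · rintro ⟨ε₀, hε₀, hP⟩
    exact ⟨ε₀, hε₀.1, fun ε hε => hP ε ⟨hε.1, hε.2.trans hε₀.2⟩ hε.2⟩

theorem eventually_mem_Ioc_zero_one : ∀ᶠ ε in 𝓝[>] (0 : ℝ), ε ∈ Ioc (0 : ℝ) 1 :=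
  Ioc_mem_nhdsGT zero_lt_one

theorem eventually_mul_le_one (C : ℝ) : ∀ᶠ ε in 𝓝[>] (0 : ℝ), C * ε ≤ 1 :=
  (((continuous_const_mul C).tendsto' 0 0 (mul_zero C)).mono_left nhdsWithin_le_nhds).eventually
    (eventually_le_nhds zero_lt_one)

theorem eventually_mul_pow_succ_le (C : ℝ) (m : ℕ) :
    ∀ᶠ ε in 𝓝[>] (0 : ℝ), C * ε ^ (m + 1) ≤ ε ^ m := by
  filter_upwards [eventually_mul_le_one C, self_mem_nhdsWithin] with ε hCε (hε : 0 < ε)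
  calc C * ε ^ (m + 1) = C * ε * ε ^ m := by ring
    _ ≤ ε ^ m := mul_le_of_le_one_left (by positivity) hCε

theorem eventually_mul_inv_pow_le (C : ℝ) (m : ℕ) :
    ∀ᶠ ε in 𝓝[>] (0 : ℝ), C * ε⁻¹ ^ m ≤ ε⁻¹ ^ (m + 1) := by
  filter_upwards [eventually_mul_le_one C, self_mem_nhdsWithin] with ε hCε (hε : 0 < ε)
  rw [pow_succ']
  exact mul_le_mul_of_nonneg_right (by rwa [← one_div, le_div_iff₀ hε]) (by positivity)

theorem inv_pow_le_inv_pow_of_mem_Ioc {ε : ℝ} (hε : ε ∈ Ioc (0 : ℝ) 1) {m n : ℕ} (hmn : m ≤ n) :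
    ε⁻¹ ^ m ≤ ε⁻¹ ^ n :=
  pow_le_pow_right₀ ((one_le_inv₀ hε.1).2 hε.2) hmn

theorem moderate_iff {u : ℝ → ℝ → ℂ} :
    Moderate u ↔ ∀ k, ∃ m : ℕ, ∀ᶠ ε in 𝓝[>] 0, apSeminorm k (u ε) ≤ ε⁻¹ ^ m := by
  refine forall_congr' fun k => ⟨fun ⟨m, C, _, hC⟩ => ⟨m + 1, ?_⟩, fun ⟨m, hm⟩ => ?_⟩
  · filter_upwards [eventually_nhdsGT_zero_iff_Ioc.2 hC, eventually_mul_inv_pow_le C m]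
      with ε hε habs
    exact hε.trans_eq (by rw [div_eq_mul_inv, inv_pow]) |>.trans habs
  · obtain ⟨ε₀, hε₀, hm⟩ := eventually_nhdsGT_zero_iff_Ioc.1 hm
    exact ⟨m, 1, one_pos, ε₀, hε₀, fun ε hε hεε₀ =>
      (hm ε hε hεε₀).trans_eq (by rw [one_div, inv_pow])⟩

theorem negligible_iff {u : ℝ → ℝ → ℂ} :
    Negligible u ↔ ∀ k m : ℕ, ∀ᶠ ε in 𝓝[>] 0, apSeminorm k (u ε) ≤ ε ^ m := by
  refine ⟨fun hu k m => ?_, fun hm k m => ?_⟩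
  · obtain ⟨C, _, hC⟩ := hu k (m + 1)
    filter_upwards [eventually_nhdsGT_zero_iff_Ioc.2 hC, eventually_mul_pow_succ_le C m]
      with ε hε habs
    exact hε.trans habs
  · obtain ⟨ε₀, hε₀, hm⟩ := eventually_nhdsGT_zero_iff_Ioc.1 (hm k m)
    exact ⟨1, one_pos, ε₀, hε₀, fun ε hε hεε₀ => (hm ε hε hεε₀).trans_eq (one_mul _).symm⟩

theorem BAp.norm_iteratedDeriv_le_apSeminorm {f : ℝ → ℂ} (hf : BAp f) {j k : ℕ} (hjk : j ≤ k)
    (x : ℝ) : ‖iteratedDeriv j f x‖ ≤ apSeminorm k f :=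
  (le_ciSup (hf.2 j).bddAbove_range_norm x).trans <|
    Finset.single_le_sum (f := fun i => ⨆ x, ‖iteratedDeriv i f x‖)
      (fun _ _ => Real.iSup_nonneg fun _ => norm_nonneg _) (Finset.mem_range_succ_iff.2 hjk)

theorem apSeminorm_le_of_forall_norm_le {f : ℝ → ℂ} {k : ℕ} {B : ℝ}
    (h : ∀ j ≤ k, ∀ x, ‖iteratedDeriv j f x‖ ≤ B) : apSeminorm k f ≤ (k + 1) * B :=
  calc apSeminorm k f ≤ ∑ _j ∈ Finset.range (k + 1), B :=
        Finset.sum_le_sum fun j hj => ciSup_le (h j (Finset.mem_range_succ_iff.1 hj))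
    _ = (k + 1) * B := by simp

/-- Constant factors are absorbed into one more power of `ε⁻¹` (resp. `ε`), cf. `moderate_iff`
and `negligible_iff`. -/
def ModerateDeriv (w : ℝ → ℝ → ℂ) (j : ℕ) : Prop :=
  ∃ m : ℕ, ∀ᶠ ε in 𝓝[>] 0, ∀ x, ‖iteratedDeriv j (w ε) x‖ ≤ ε⁻¹ ^ m

def NegligibleDeriv (w : ℝ → ℝ → ℂ) (j : ℕ) : Prop :=
  ∀ m : ℕ, ∀ᶠ ε in 𝓝[>] 0, ∀ x, ‖iteratedDeriv j (w ε) x‖ ≤ ε ^ m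

section Nets

variable {u v w : ℝ → ℝ → ℂ}

theorem Moderate.moderateDeriv (hu : Moderate u) (hBAp : ∀ ε ∈ Ioc (0 : ℝ) 1, BAp (u ε))
    (j : ℕ) : ModerateDeriv u j := by
  obtain ⟨m, hm⟩ := moderate_iff.1 hu j
  refine ⟨m, ?_⟩
  filter_upwards [hm, eventually_mem_Ioc_zero_one] with ε hε hε₁ x
  exact ((hBAp ε hε₁).norm_iteratedDeriv_le_apSeminorm le_rfl x).trans hε

theorem Negligible.negligibleDeriv (hw : Negligible w) (hBAp : ∀ ε ∈ Ioc (0 : ℝ) 1, BAp (w ε))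
    (j : ℕ) : NegligibleDeriv w j := fun m => by
  filter_upwards [negligible_iff.1 hw j m, eventually_mem_Ioc_zero_one] with ε hε hε₁ x
  exact ((hBAp ε hε₁).norm_iteratedDeriv_le_apSeminorm le_rfl x).trans hε

theorem ModerateDeriv.exists_forall_le (hw : ∀ j, ModerateDeriv w j) (k : ℕ) :
    ∃ m : ℕ, ∀ᶠ ε in 𝓝[>] 0, ∀ j ≤ k, ∀ x, ‖iteratedDeriv j (w ε) x‖ ≤ ε⁻¹ ^ m := by
  choose m hm using hw
  refine ⟨(Finset.Iic k).sup m, ?_⟩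
  filter_upwards [(eventually_all_finset (Finset.Iic k)).2 fun j _ => hm j,
    eventually_mem_Ioc_zero_one] with ε hε hε₁ j hj x
  have hj' := Finset.mem_Iic.2 hj
  exact (hε j hj' x).trans (inv_pow_le_inv_pow_of_mem_Ioc hε₁ (Finset.le_sup hj'))

theorem moderate_of_moderateDeriv (hw : ∀ j, ModerateDeriv w j) : Moderate w := by
  refine moderate_iff.2 fun k => ?_
  obtain ⟨m, hm⟩ := ModerateDeriv.exists_forall_le hw k
  refine ⟨m + 1, ?_⟩
  filter_upwards [hm, eventually_mul_inv_pow_le (k + 1) m] with ε hε habs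
  exact (apSeminorm_le_of_forall_norm_le hε).trans habs

theorem negligible_of_negligibleDeriv (hw : ∀ j, NegligibleDeriv w j) : Negligible w := by
  refine negligible_iff.2 fun k m => ?_
  filter_upwards [(eventually_all_finset (Finset.Iic k)).2 fun j _ => hw j (m + 1),
    eventually_mul_pow_succ_le (k + 1) m] with ε hε habs
  exact (apSeminorm_le_of_forall_norm_le fun j hj => hε j (Finset.mem_Iic.2 hj)).trans habs

theorem ModerateDeriv.sub (hu_smooth : ∀ᶠ ε in 𝓝[>] 0, ContDiff ℝ ∞ (u ε))
    (hv_smooth : ∀ᶠ ε in 𝓝[>] 0, ContDiff ℝ ∞ (v ε)) {j : ℕ} (hu : ModerateDeriv u j)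
    (hv : ModerateDeriv v j) : ModerateDeriv (fun ε x => u ε x - v ε x) j := by
  obtain ⟨m₁, hm₁⟩ := hu
  obtain ⟨m₂, hm₂⟩ := hv
  refine ⟨max m₁ m₂ + 1, ?_⟩
  filter_upwards [hu_smooth, hv_smooth, hm₁, hm₂, eventually_mem_Ioc_zero_one,
    eventually_mul_inv_pow_le 2 (max m₁ m₂)] with ε hus hvs hu hv hε habs x
  rw [iteratedDeriv_fun_sub_eq hus hvs]
  calc ‖iteratedDeriv j (u ε) x - iteratedDeriv j (v ε) x‖
      ≤ ε⁻¹ ^ max m₁ m₂ + ε⁻¹ ^ max m₁ m₂ := (norm_sub_le _ _).trans <| add_le_add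
        ((hu x).trans (inv_pow_le_inv_pow_of_mem_Ioc hε (le_max_left _ _)))
        ((hv x).trans (inv_pow_le_inv_pow_of_mem_Ioc hε (le_max_right _ _)))
    _ = 2 * ε⁻¹ ^ max m₁ m₂ := by ring
    _ ≤ ε⁻¹ ^ (max m₁ m₂ + 1) := habs

theorem ModerateDeriv.comp {F : ℂ → ℂ} (hF : ContDiff ℝ ∞ F)
    (hgrowth : ∀ n : ℕ, ∃ C > (0 : ℝ), ∃ N : ℕ, ∀ z : ℂ,
      ‖iteratedFDeriv ℝ n F z‖ ≤ C * (1 + ‖z‖) ^ N)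
    (hu_smooth : ∀ᶠ ε in 𝓝[>] 0, ContDiff ℝ ∞ (u ε)) (hu : ∀ j, ModerateDeriv u j) (j : ℕ) :
    ModerateDeriv (fun ε x => F (u ε x)) j := by
  obtain ⟨C, hC, N, hFC⟩ := exists_forall_le_mul_one_add_norm_pow hgrowth j
  obtain ⟨m, hm⟩ := ModerateDeriv.exists_forall_le hu j
  refine ⟨m * (N + j) + 1, ?_⟩
  filter_upwards [hu_smooth, hm, eventually_mem_Ioc_zero_one,
    eventually_mul_inv_pow_le (j.factorial * C * 2 ^ (N + j)) (m * (N + j))]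
    with ε hsmooth hbound hε habs x
  have hone : 1 ≤ ε⁻¹ ^ m := one_le_pow₀ ((one_le_inv₀ hε.1).2 hε.2)
  calc ‖iteratedDeriv j (fun x => F (u ε x)) x‖
      ≤ j.factorial * C * (1 + ε⁻¹ ^ m) ^ (N + j) :=
        norm_iteratedDeriv_comp_le_of_growth hF hsmooth hC.le hFC fun i hi => hbound i hi x
    _ ≤ j.factorial * C * (2 * ε⁻¹ ^ m) ^ (N + j) := by gcongr; linarith
    _ = j.factorial * C * 2 ^ (N + j) * ε⁻¹ ^ (m * (N + j)) := by rw [mul_pow, pow_mul]; ring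
    _ ≤ ε⁻¹ ^ (m * (N + j) + 1) := habs

theorem NegligibleDeriv.comp_sub_zero {F : ℂ → ℂ} (hF : Differentiable ℝ F)
    (hgrowth : ∃ C > (0 : ℝ), ∃ N : ℕ, ∀ z : ℂ, ‖fderiv ℝ F z‖ ≤ C * (1 + ‖z‖) ^ N)
    (hu : ModerateDeriv u 0) (hv : ModerateDeriv v 0)
    (huv : NegligibleDeriv (fun ε x => u ε x - v ε x) 0) :
    NegligibleDeriv (fun ε x => F (u ε x) - F (v ε x)) 0 := by
  obtain ⟨C, hC, N, hFC⟩ := hgrowth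
  obtain ⟨m₁, hm₁⟩ := hu
  obtain ⟨m₂, hm₂⟩ := hv
  set M := max m₁ m₂
  intro m
  filter_upwards [hm₁, hm₂, huv (m + 1 + M * N), eventually_mem_Ioc_zero_one,
    eventually_mul_pow_succ_le (C * 2 ^ N) m] with ε hu hv huv hε habs x
  simp only [iteratedDeriv_zero] at hu hv huv ⊢
  have hone : 1 ≤ ε⁻¹ ^ M := one_le_pow₀ ((one_le_inv₀ hε.1).2 hε.2)
  calc ‖F (u ε x) - F (v ε x)‖ ≤ C * (1 + ε⁻¹ ^ M) ^ N * ‖u ε x - v ε x‖ :=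
        norm_sub_le_of_norm_fderiv_le hF hC.le hFC
          ((hu x).trans (inv_pow_le_inv_pow_of_mem_Ioc hε (le_max_left _ _)))
          ((hv x).trans (inv_pow_le_inv_pow_of_mem_Ioc hε (le_max_right _ _)))
    _ ≤ C * (2 * ε⁻¹ ^ M) ^ N * ε ^ (m + 1 + M * N) := by gcongr; exacts [by linarith, huv x]
    _ = C * 2 ^ N * ε ^ (m + 1) := by
        rw [mul_pow, ← pow_mul, pow_add, inv_pow, mul_comm M N]
        field_simp [hε.1.ne']
    _ ≤ ε ^ m := habs

theorem NegligibleDeriv.succ (hsmooth : ∀ᶠ ε in 𝓝[>] 0, ContDiff ℝ ∞ (w ε)) {j : ℕ}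
    (hw : NegligibleDeriv w j) (hmod : ModerateDeriv w (j + 2)) : NegligibleDeriv w (j + 1) := by
  obtain ⟨m₂, hm₂⟩ := hmod
  intro m
  filter_upwards [hsmooth, hw (2 * (m + 1) + m₂), hm₂, eventually_mem_Ioc_zero_one,
    eventually_mul_pow_succ_le 3 m] with ε hsm h₀ h₂ hε habs x
  have hsm' : ContDiff ℝ 2 (iteratedDeriv j (w ε)) := by
    rw [iteratedDeriv_eq_iterate]
    exact (hsm.iterate_deriv j).of_le (WithTop.coe_le_coe.2 le_top)
  have h₂' : ∀ y, ‖iteratedDeriv 2 (iteratedDeriv j (w ε)) y‖ ≤ ε⁻¹ ^ m₂ := by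
    simpa only [iteratedDeriv_eq_iterate, ← Function.iterate_add_apply, add_comm 2 j] using h₂
  -- with `h = ε ^ (m + 1 + m₂)` both terms of Landau's bound are `O(ε ^ (m + 1))`
  have hlandau := norm_deriv_le_of_norm_le_of_norm_iteratedDeriv_two_le hsm' h₀ h₂'
    (pow_pos hε.1 (m + 1 + m₂)) x
  rw [← iteratedDeriv_succ] at hlandau
  refine hlandau.trans (le_of_eq_of_le ?_ habs)
  rw [inv_pow]
  field_simp [hε.1.ne']
  ring

theorem negligibleDeriv_of_moderateDeriv (hsmooth : ∀ᶠ ε in 𝓝[>] 0, ContDiff ℝ ∞ (w ε))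
    (hmod : ∀ j, ModerateDeriv w j) (h₀ : NegligibleDeriv w 0) : ∀ j, NegligibleDeriv w j
  | 0 => h₀
  | j + 1 => (negligibleDeriv_of_moderateDeriv hsmooth hmod h₀ j).succ hsmooth (hmod (j + 2))

end Nets

/-- composition with a smooth slowly increasing function `F : ℂ → ℂ`
maps `𝓖_ap` to `𝓖_ap`: it preserves moderateness, membership in `𝓑_ap`, and
negligibility of differences. -/
theorem gap_composition (F : ℂ → ℂ) (hF : ContDiff ℝ (⊤ : ℕ∞) F)
    (hgrowth : ∀ n : ℕ, ∃ C > (0:ℝ), ∃ N : ℕ, ∀ z : ℂ,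
      ‖iteratedFDeriv ℝ n F z‖ ≤ C * (1 + ‖z‖) ^ N)
    (u v : ℝ → ℝ → ℂ)
    (hu_ap : ∀ ε ∈ Set.Ioc (0:ℝ) 1, BAp (u ε)) (hu : Moderate u)
    (hv_ap : ∀ ε ∈ Set.Ioc (0:ℝ) 1, BAp (v ε)) (hv : Moderate v)
    (huv : Negligible (fun ε x => u ε x - v ε x)) :
    ((∀ ε ∈ Set.Ioc (0:ℝ) 1, BAp (fun x => F (u ε x))) ∧
        Moderate (fun ε x => F (u ε x))) ∧
      Negligible (fun ε x => F (u ε x) - F (v ε x)) := by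
  have hu_smooth : ∀ᶠ ε in 𝓝[>] 0, ContDiff ℝ ∞ (u ε) :=
    eventually_mem_Ioc_zero_one.mono fun ε hε => (hu_ap ε hε).1
  have hv_smooth : ∀ᶠ ε in 𝓝[>] 0, ContDiff ℝ ∞ (v ε) :=
    eventually_mem_Ioc_zero_one.mono fun ε hε => (hv_ap ε hε).1
  have hFu := ModerateDeriv.comp hF hgrowth hu_smooth (hu.moderateDeriv hu_ap)
  have hFv := ModerateDeriv.comp hF hgrowth hv_smooth (hv.moderateDeriv hv_ap)
  refine ⟨⟨fun ε hε => (hu_ap ε hε).comp hF, moderate_of_moderateDeriv hFu⟩, ?_⟩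
  have hF_smooth (w : ℝ → ℝ → ℂ) (hw : ∀ᶠ ε in 𝓝[>] 0, ContDiff ℝ ∞ (w ε)) :
      ∀ᶠ ε in 𝓝[>] 0, ContDiff ℝ ∞ fun x => F (w ε x) := hw.mono fun ε => hF.comp
  have hF₁ : ∃ C > (0 : ℝ), ∃ N : ℕ, ∀ z : ℂ, ‖fderiv ℝ F z‖ ≤ C * (1 + ‖z‖) ^ N := by
    simpa only [norm_iteratedFDeriv_one] using hgrowth 1
  have h₀ : NegligibleDeriv (fun ε x => F (u ε x) - F (v ε x)) 0 :=
    NegligibleDeriv.comp_sub_zero (hF.differentiable (by simp)) hF₁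
      (hu.moderateDeriv hu_ap 0) (hv.moderateDeriv hv_ap 0)
      (huv.negligibleDeriv (fun ε hε => (hu_ap ε hε).sub (hv_ap ε hε)) 0)
  refine negligible_of_negligibleDeriv (negligibleDeriv_of_moderateDeriv ?_
    (fun j => (hFu j).sub (hF_smooth u hu_smooth) (hF_smooth v hv_smooth) (hFv j)) h₀)
  filter_upwards [hF_smooth u hu_smooth, hF_smooth v hv_smooth] with ε hFuε hFvε
  exact hFuε.sub hFvε
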